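/- arXiv:1203.1457 — 5 statements merged into one kernel-verified Lean document; each statement's English description precedes it below -/
import Mathlib

section
/- If v is the fixed point of the operator T_i(v) = min_{(σ,ν) ∈ P_i} [c'_i + γ(D_i − Σ_d d·σ^d)/D_i + α Σ_j ν_j v_j], then the pair (v, λ) with λ = (1−α)·min_{z ∈ Z} ⟨z, v⟩ solves the ergodic dynamic programming equation v_i + λ = min_{(σ,ν) ∈ P_i, z ∈ Z} [c'_i + γ(D_i − Σ_d d·σ^d)/D_i + Σ_j (α ν_j + (1−α) z_j) v_j] for all i. -/
open Set Pointwise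

lemma inf_add_inf {β γ : Type*} {A : Set β} {B : Set γ} (f : β → ℝ) (g : γ → ℝ)
    (hA : A.Nonempty) (hB : B.Nonempty)
    (hfb : BddBelow (f '' A)) (hgb : BddBelow (g '' B)) :
    sInf ((fun q : β × γ => f q.1 + g q.2) '' (A ×ˢ B)) = sInf (f '' A) + sInf (g '' B) := by
  obtain ⟨a0, ha0⟩ := hA
  obtain ⟨b0, hb0⟩ := hB
  obtain ⟨cf, hcf⟩ := hfb
  obtain ⟨cg, hcg⟩ := hgb
  have hSne : ((fun q : β × γ => f q.1 + g q.2) '' (A ×ˢ B)).Nonempty :=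
    ⟨_, ⟨(a0, b0), ⟨ha0, hb0⟩, rfl⟩⟩
  have hSb : BddBelow ((fun q : β × γ => f q.1 + g q.2) '' (A ×ˢ B)) := by
    refine ⟨cf + cg, ?_⟩
    rintro x ⟨⟨a, b⟩, ⟨ha, hb⟩, rfl⟩
    exact add_le_add (hcf ⟨a, ha, rfl⟩) (hcg ⟨b, hb, rfl⟩)
  apply le_antisymm
  · -- sInf S ≤ sInf f + sInf g
    have key : ∀ a ∈ A, sInf ((fun q : β × γ => f q.1 + g q.2) '' (A ×ˢ B)) ≤ f a + sInf (g '' B) := by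
      intro a ha
      have h1 : sInf ((fun q : β × γ => f q.1 + g q.2) '' (A ×ˢ B)) - f a ≤ sInf (g '' B) := by
        have hgne : (g '' B).Nonempty := ⟨g b0, b0, hb0, rfl⟩
        apply le_csInf hgne
        rintro x ⟨b, hb, rfl⟩
        have h3 : sInf ((fun q : β × γ => f q.1 + g q.2) '' (A ×ˢ B)) ≤ f a + g b :=
          csInf_le hSb ⟨(a, b), ⟨ha, hb⟩, rfl⟩
        linarith
      linarith
    have h2 : sInf ((fun q : β × γ => f q.1 + g q.2) '' (A ×ˢ B)) - sInf (g '' B) ≤ sInf (f '' A) := by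
      have hfne : (f '' A).Nonempty := ⟨f a0, a0, ha0, rfl⟩
      apply le_csInf hfne
      rintro x ⟨a, ha, rfl⟩
      have := key a ha
      linarith
    linarith
  · apply le_csInf hSne
    rintro x ⟨⟨a, b⟩, ⟨ha, hb⟩, rfl⟩
    exact add_le_add (csInf_le ⟨cf, hcf⟩ ⟨a, ha, rfl⟩) (csInf_le ⟨cg, hcg⟩ ⟨b, hb, rfl⟩)

theorem stmt_2 (n N : ℕ) (hn : 1 ≤ n) (hN : 1 ≤ N) (hNn : N ≤ n)
    (α : ℝ) (hα : 0 ≤ α) (hα1 : α < 1)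
    (γ : ℝ) (hγ : 0 < γ)
    (c' : Fin n → ℝ) (D : Fin n → ℕ) (hD : ∀ i, 1 ≤ D i)
    (Z : Set (Fin n → ℝ))
    (hZ : Z = {z : Fin n → ℝ | (∑ j, z j) = 1 ∧ ∀ j, 0 ≤ z j ∧ z j ≤ 1 / N})
    (P : ∀ i : Fin n, Set ((Fin (D i + 1) → ℝ) × (Fin n → ℝ)))
    (hne : ∀ i, (P i).Nonempty) (hcomp : ∀ i, IsCompact (P i))
    (hprob : ∀ i, ∀ p ∈ P i,
      ((∀ d, 0 ≤ p.1 d) ∧ (∑ d, p.1 d) = 1) ∧ ((∀ j, 0 ≤ p.2 j) ∧ (∑ j, p.2 j) = 1))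
    (v : Fin n → ℝ)
    (hfix : ∀ i, v i = sInf ((fun p : (Fin (D i + 1) → ℝ) × (Fin n → ℝ) =>
      c' i + γ * ((D i : ℝ) - ∑ d : Fin (D i + 1), (d.val : ℝ) * p.1 d) / (D i : ℝ)
        + α * ∑ j, p.2 j * v j) '' P i)) :
    ∀ i, v i + (1 - α) * sInf ((fun z => ∑ j, z j * v j) '' Z) =
      sInf ((fun q : ((Fin (D i + 1) → ℝ) × (Fin n → ℝ)) × (Fin n → ℝ) =>
        c' i + γ * ((D i : ℝ) - ∑ d : Fin (D i + 1), (d.val : ℝ) * q.1.1 d) / (D i : ℝ)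
          + ∑ j, (α * q.1.2 j + (1 - α) * q.2 j) * v j) '' ((P i) ×ˢ Z)) := by
  intro i
  have hNpos : (0:ℝ) < N := by exact_mod_cast hN
  have hnpos : (0:ℝ) < n := by exact_mod_cast hn
  -- Z is nonempty
  have hZne : Z.Nonempty := by
    refine ⟨fun _ => 1 / n, ?_⟩
    rw [hZ]
    refine ⟨?_, fun j => ⟨by positivity, ?_⟩⟩
    · simp [Finset.sum_const, Finset.card_univ]
      field_simp
    · apply one_div_le_one_div_of_le hNpos
      exact_mod_cast hNn
  set f : (Fin (D i + 1) → ℝ) × (Fin n → ℝ) → ℝ := fun p =>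
    c' i + γ * ((D i : ℝ) - ∑ d : Fin (D i + 1), (d.val : ℝ) * p.1 d) / (D i : ℝ)
      + α * ∑ j, p.2 j * v j with hf
  set g : (Fin n → ℝ) → ℝ := fun z => (1 - α) * ∑ j, z j * v j with hg
  -- rewrite the objective as a sum
  have hfun : (fun q : ((Fin (D i + 1) → ℝ) × (Fin n → ℝ)) × (Fin n → ℝ) =>
        c' i + γ * ((D i : ℝ) - ∑ d : Fin (D i + 1), (d.val : ℝ) * q.1.1 d) / (D i : ℝ)
          + ∑ j, (α * q.1.2 j + (1 - α) * q.2 j) * v j) = fun q => f q.1 + g q.2 := by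
    have hsum : ∀ (ν z : Fin n → ℝ), ∑ j, (α * ν j + (1 - α) * z j) * v j
        = α * ∑ j, ν j * v j + (1 - α) * ∑ j, z j * v j := by
      intro ν z
      rw [Finset.mul_sum, Finset.mul_sum, ← Finset.sum_add_distrib]
      exact Finset.sum_congr rfl fun j _ => by ring
    funext q
    simp only [hf, hg]
    rw [hsum]
    ring
  -- bddBelow for f on P i via compactness
  have hcont : Continuous f := by fun_prop
  have hfb : BddBelow (f '' P i) := ((hcomp i).image hcont).bddBelow
  -- bddBelow for g on Z
  have hgb : BddBelow (g '' Z) := by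
    refine ⟨(1 - α) * -((∑ j, |v j|) / N), ?_⟩
    rintro x ⟨z, hz, rfl⟩
    rw [hZ] at hz
    obtain ⟨-, hzj⟩ := hz
    apply mul_le_mul_of_nonneg_left _ (by linarith)
    have heq : -((∑ j, |v j|) / (N:ℝ)) = ∑ j, -(|v j| / N) := by
      rw [Finset.sum_neg_distrib, Finset.sum_div]
    rw [heq]
    apply Finset.sum_le_sum
    intro j _
    have h1 : |z j * v j| ≤ |v j| / N := by
      rw [abs_mul, div_eq_mul_one_div, mul_comm (|v j|)]
      apply mul_le_mul_of_nonneg_right _ (abs_nonneg _)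
      rw [abs_of_nonneg (hzj j).1]; exact (hzj j).2
    calc -(|v j| / N) ≤ -|z j * v j| := by linarith
      _ ≤ z j * v j := neg_abs_le _
  rw [hfun, inf_add_inf f g (hne i) hZne hfb hgb]
  congr 1
  · exact hfix i
  · -- (1-α) * sInf (h '' Z) = sInf (g '' Z)
    have : g '' Z = (1 - α) • ((fun z => ∑ j, z j * v j) '' Z) := by
      rw [← Set.image_smul, Set.image_image]
      rfl
    rw [this, Real.sInf_smul_of_nonneg (by linarith)]
    rfl
end

section
/- If the penalty factor satisfies γ > 2α‖c'‖_∞/(1−α) and the bias vector v satisfies ‖v‖_∞ ≤ ‖c'‖_∞/(1−α), then for every page i the minimum in T_i(v) = min over d and subsets J ⊆ F_i with |J| = d of [c'_i + γ(D_i − |J|)/D_i + (α/|J|)Σ_{j∈J} v_j] is attained at J = F_i (no link removed): formally, for all nonempty J ⊆ F_i, c'_i + γ(D_i−|J|)/D_i + (α/|J|)Σ_{j∈J} v_j ≥ c'_i + (α/D_i)Σ_{j∈F_i} v_j. -/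
theorem stmt_7 (n : ℕ) (hn : 1 ≤ n) (α : ℝ) (hα : 0 ≤ α) (hα1 : α < 1)
    (c' : Fin n → ℝ) (γ : ℝ) (hγ : γ > 2 * α * ‖c'‖ / (1 - α))
    (v : Fin n → ℝ) (hv : ‖v‖ ≤ ‖c'‖ / (1 - α))
    (i : Fin n) (F : Finset (Fin n)) (hF : F.Nonempty) (D : ℕ) (hD : D = F.card) :
    ∀ J : Finset (Fin n), J.Nonempty → J ⊆ F →
      c' i + γ * ((D : ℝ) - J.card) / D + (α / J.card) * ∑ j ∈ J, v j ≥
        c' i + (α / D) * ∑ j ∈ F, v j := by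
  intro J hJne hJF
  set M := ‖v‖ with hM
  have hM0 : 0 ≤ M := norm_nonneg v
  -- γ ≥ 2 α M
  have hγM : 2 * α * M ≤ γ := by
    have h1 : 2 * α * M ≤ 2 * α * (‖c'‖ / (1 - α)) := by
      apply mul_le_mul_of_nonneg_left hv (by linarith)
    have h2 : 2 * α * (‖c'‖ / (1 - α)) = 2 * α * ‖c'‖ / (1 - α) := by ring
    linarith [hγ]
  set k : ℝ := (J.card : ℝ) with hk
  set Dn : ℝ := (D : ℝ) with hDn
  have hk1 : 1 ≤ k := by
    rw [hk]; exact_mod_cast Finset.card_pos.mpr hJne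
  have hkD : k ≤ Dn := by
    rw [hk, hDn, hD]; exact_mod_cast Finset.card_le_card hJF
  have hk0 : 0 < k := by linarith
  have hDn0 : 0 < Dn := by linarith
  -- sum bounds
  have hbound : ∀ (S : Finset (Fin n)), |∑ j ∈ S, v j| ≤ (S.card : ℝ) * M := by
    intro S
    calc |∑ j ∈ S, v j| ≤ ∑ j ∈ S, |v j| := Finset.abs_sum_le_sum_abs _ _
      _ ≤ ∑ j ∈ S, M := by
          apply Finset.sum_le_sum
          intro j _
          have := norm_le_pi_norm v j
          simpa [Real.norm_eq_abs] using this
      _ = (S.card : ℝ) * M := by simp [mul_comm]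
  have hSJ : |∑ j ∈ J, v j| ≤ k * M := hbound J
  have hsplit : ∑ j ∈ F, v j = ∑ j ∈ J, v j + ∑ j ∈ F \ J, v j := by
    rw [← Finset.sum_union (Finset.sdiff_disjoint.symm)]
    congr 1
    exact (Finset.union_sdiff_of_subset hJF).symm
  have hcardR : ((F \ J).card : ℝ) = Dn - k := by
    rw [Finset.card_sdiff_of_subset hJF, hDn, hD, hk]
    push_cast [Nat.cast_sub (Finset.card_le_card hJF)]
    ring
  have hSR : |∑ j ∈ F \ J, v j| ≤ (Dn - k) * M := by
    have := hbound (F \ J); rwa [hcardR] at this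
  set SJ := ∑ j ∈ J, v j with hSJdef
  set SR := ∑ j ∈ F \ J, v j with hSRdef
  rw [hsplit, ge_iff_le, ← sub_nonneg]
  have hnum : 0 ≤ γ * (Dn - k) * k + α * Dn * SJ - α * k * (SJ + SR) := by
    have h1 : -(k * M) ≤ SJ := neg_le_of_abs_le hSJ
    have h2 : SJ ≤ k * M := le_of_abs_le hSJ
    have h3 : -((Dn - k) * M) ≤ SR := neg_le_of_abs_le hSR
    have h4 : SR ≤ (Dn - k) * M := le_of_abs_le hSR
    nlinarith [mul_nonneg (mul_nonneg (sub_nonneg.mpr hkD) hk0.le) (sub_nonneg.mpr hγM),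
      mul_nonneg hα (sub_nonneg.mpr hkD), mul_nonneg hα hk0.le]
  have heq : c' i + γ * (Dn - k) / Dn + α / k * SJ - (c' i + α / Dn * (SJ + SR))
      = (γ * (Dn - k) * k + α * Dn * SJ - α * k * (SJ + SR)) / (Dn * k) := by
    field_simp
    ring
  rw [heq]
  positivity
end

section
/- In the polytope P_x defined by equations (a)–(g) with disjunctive structure, every extreme point (σ, ν) has σ equal to a 0–1 vector, i.e., there is d* with σ^{d*} = 1 and σ^d = 0 for d ≠ d*. -/
/-!
Apart from `∑ d, σ d = 1`, every constraint involves a single block `(σ d, w d)` and is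
positively homogeneous in it. Hence, dropping the normalization, the feasible `(σ, ν)` form a
cone in which every point is the sum of its `d`-th block and the remaining blocks. If
`0 < σ d < 1`, rescaling both pieces to `∑ σ = 1` writes `(σ, ν)` as a proper convex
combination of two points of `P`, the first with `σ = Pi.single d 1`; so at an extreme point
`σ d = 1` as soon as `σ d > 0`.
-/

open Finset

theorem eq_smul_add_of_add_mem_extremePoints {E : Type*} [AddCommGroup E] [Module ℝ E]
    {K : Set E} (hK : ∀ c : ℝ, 0 < c → ∀ x ∈ K, c • x ∈ K) (φ : E →ₗ[ℝ] ℝ) {y z : E}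
    (hy : y ∈ K) (hz : z ∈ K) (hφy : 0 < φ y) (hφz : 0 < φ z)
    (hyz : y + z ∈ Set.extremePoints ℝ {x ∈ K | φ x = 1}) :
    y = φ y • (y + z) := by
  have hφ : φ y + φ z = 1 := by rw [← map_add]; exact hyz.1.2
  have rescale : ∀ x ∈ K, 0 < φ x → (φ x)⁻¹ • x ∈ {x ∈ K | φ x = 1} := fun x hx hφx =>
    ⟨hK _ (inv_pos.mpr hφx) x hx, by rw [map_smul, smul_eq_mul, inv_mul_cancel₀ hφx.ne']⟩
  have hseg : y + z ∈ openSegment ℝ ((φ y)⁻¹ • y) ((φ z)⁻¹ • z) :=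
    ⟨φ y, φ z, hφy, hφz, hφ, by simp only [smul_inv_smul₀ hφy.ne', smul_inv_smul₀ hφz.ne']⟩
  have := hyz.2 (rescale y hy hφy) (rescale z hz hφz) hseg
  rw [← this, smul_inv_smul₀ hφy.ne']

theorem eq_single_of_nonneg_of_sum_eq_one {ι : Type*} [Fintype ι] [DecidableEq ι] {f : ι → ℝ}
    (hf : ∀ j, 0 ≤ f j) (hsum : ∑ j, f j = 1) {i : ι} (hi : f i = 1) : f = Pi.single i 1 := by
  funext j
  rcases eq_or_ne j i with rfl | hji
  · simp [hi]
  · have := add_le_sum (fun k _ => hf k) (mem_univ i) (mem_univ j) hji.symm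
    rw [Pi.single_eq_of_ne hji]
    linarith [hf j]

namespace Disjunctive

variable {ι V : Type*} [Fintype ι] [AddCommGroup V]

/-- `p.1 i` is the weight of the `i`-th disjunct and `w i` its share of `p.2`; `C i` is the
homogenized `i`-th disjunct. -/
def cone (C : ι → Set (ℝ × V)) : Set ((ι → ℝ) × V) :=
  {p | ∃ w : ι → V, (∀ i, (p.1 i, w i) ∈ C i) ∧ p.2 = ∑ i, w i}

def hull (C : ι → Set (ℝ × V)) : Set ((ι → ℝ) × V) :=
  {p ∈ cone C | ∑ i, p.1 i = 1}

variable {C : ι → Set (ℝ × V)}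

theorem smul_mem_cone [Module ℝ V] (hC : ∀ i, ∀ c : ℝ, 0 < c → ∀ x ∈ C i, c • x ∈ C i)
    {c : ℝ} (hc : 0 < c) {p : (ι → ℝ) × V} (hp : p ∈ cone C) : c • p ∈ cone C := by
  obtain ⟨w, hw, hpw⟩ := hp
  exact ⟨c • w, fun i => hC i c hc _ (hw i), by simp [hpw, Finset.smul_sum]⟩

variable [DecidableEq ι]

theorem single_mem_cone (hC0 : ∀ i, (0 : ℝ × V) ∈ C i) {σ : ι → ℝ} {w : ι → V}
    (hw : ∀ i, (σ i, w i) ∈ C i) (i : ι) : (Pi.single i (σ i), w i) ∈ cone C := by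
  refine ⟨Pi.single i (w i), fun j => ?_, by simp⟩
  rcases eq_or_ne j i with rfl | hji
  · simpa using hw j
  · simpa [Pi.single_eq_of_ne hji, ← Prod.mk_zero_zero] using hC0 j

theorem sub_single_mem_cone (hC0 : ∀ i, (0 : ℝ × V) ∈ C i) {σ : ι → ℝ} {w : ι → V}
    (hw : ∀ i, (σ i, w i) ∈ C i) (i : ι) :
    (σ - Pi.single i (σ i), ∑ j, w j - w i) ∈ cone C := by
  refine ⟨w - Pi.single i (w i), fun j => ?_, by simp [Finset.sum_sub_distrib]⟩
  rcases eq_or_ne j i with rfl | hji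
  · simpa [← Prod.mk_zero_zero] using hC0 j
  · simpa [Pi.single_eq_of_ne hji] using hw j

theorem fst_eq_single_of_mem_extremePoints_hull [Module ℝ V] (hC0 : ∀ i, (0 : ℝ × V) ∈ C i)
    (hC : ∀ i, ∀ c : ℝ, 0 < c → ∀ x ∈ C i, c • x ∈ C i) (hC_fst : ∀ i, ∀ x ∈ C i, 0 ≤ x.1)
    {p : (ι → ℝ) × V} (hp : p ∈ Set.extremePoints ℝ (hull C)) : ∃ i, p.1 = Pi.single i 1 := by
  obtain ⟨σ, ν⟩ := p
  obtain ⟨⟨w, hw, rfl : ν = _⟩, hsum : ∑ i, σ i = 1⟩ := hp.1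
  have hnonneg : ∀ i, 0 ≤ σ i := fun i => hC_fst i _ (hw i)
  obtain ⟨i, hi⟩ : ∃ i, 0 < σ i := by
    by_contra! h
    linarith [sum_nonpos (s := univ) fun j _ => h j]
  refine ⟨i, eq_single_of_nonneg_of_sum_eq_one hnonneg hsum ?_⟩
  by_contra hne
  have hlt : σ i < 1 :=
    (hsum ▸ single_le_sum (fun j _ => hnonneg j) (mem_univ i)).lt_of_ne hne
  let φ : ((ι → ℝ) × V) →ₗ[ℝ] ℝ := (∑ j, LinearMap.proj j) ∘ₗ LinearMap.fst ℝ _ V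
  have hφ : ∀ q, φ q = ∑ j, q.1 j := fun q => by simp [φ]
  have hy := single_mem_cone hC0 hw i
  have hz := sub_single_mem_cone hC0 hw i
  have hy_eq := eq_smul_add_of_add_mem_extremePoints (fun c hc q hq => smul_mem_cone hC hc hq) φ
    hy hz (by simpa [hφ] using hi) (by simpa [hφ, sum_sub_distrib, hsum] using hlt)
    (by simpa [hφ, hull] using hp)
  have hsq : σ i = σ i * σ i := by simpa [hφ] using congr_arg (fun q => q.1 i) hy_eq
  exact hne (mul_left_cancel₀ hi.ne' (by linarith : σ i * σ i = σ i * 1))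

end Disjunctive

section CappedBlock

variable {α : Type*} [Fintype α]

def cappedBlock (S : Finset α) (k : ℝ) : Set (ℝ × (α → ℝ)) :=
  {x | 0 ≤ x.1 ∧ ∑ j, x.2 j = x.1 ∧ (∀ j ∉ S, x.2 j = 0) ∧ ∀ j ∈ S, 0 ≤ x.2 j ∧ x.2 j ≤ x.1 / k}

theorem zero_mem_cappedBlock (S : Finset α) (k : ℝ) : 0 ∈ cappedBlock S k := by
  simp [cappedBlock]

theorem smul_mem_cappedBlock {S : Finset α} {k c : ℝ} (hc : 0 < c) {x : ℝ × (α → ℝ)}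
    (hx : x ∈ cappedBlock S k) : c • x ∈ cappedBlock S k := by
  obtain ⟨h0, hsum, hout, hin⟩ := hx
  refine ⟨by simpa using mul_nonneg hc.le h0, by simp [← mul_sum, hsum],
    fun j hj => by simp [hout j hj], fun j hj => ?_⟩
  simp only [Prod.smul_fst, Prod.smul_snd, Pi.smul_apply, smul_eq_mul, mul_div_assoc]
  exact ⟨mul_nonneg hc.le (hin j hj).1, mul_le_mul_of_nonneg_left (hin j hj).2 hc.le⟩

def cappedBlocks {D : ℕ} (N : ℕ) (F : Finset α) (d : Fin (D + 1)) : Set (ℝ × (α → ℝ)) :=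
  cappedBlock (if d = 0 then univ else F) (if d = 0 then N else d)

theorem setOf_eq_hull_cappedBlocks {D N : ℕ} (F : Finset α) :
    {p : (Fin (D + 1) → ℝ) × (α → ℝ) |
      ∃ w : Fin (D + 1) → α → ℝ,
        (∑ d, p.1 d) = 1 ∧
        (∀ d, 0 ≤ p.1 d) ∧
        (∀ j, p.2 j = ∑ d, w d j) ∧
        (∀ d, (∑ j, w d j) = p.1 d) ∧
        (∀ j, 0 ≤ w 0 j ∧ w 0 j ≤ p.1 0 / N) ∧
        (∀ d : Fin (D + 1), 1 ≤ (d : ℕ) → ∀ j ∉ F, w d j = 0) ∧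
        (∀ d : Fin (D + 1), 1 ≤ (d : ℕ) → ∀ j ∈ F,
          0 ≤ w d j ∧ w d j ≤ p.1 d / ((d : ℕ) : ℝ))} =
      Disjunctive.hull (cappedBlocks N F) := by
  ext ⟨σ, ν⟩
  simp only [Set.mem_ofPred_eq, Disjunctive.hull, Disjunctive.cone]
  have hpos : ∀ d : Fin (D + 1), d ≠ 0 → 1 ≤ (d : ℕ) := fun d hd =>
    Nat.one_le_iff_ne_zero.mpr (Fin.val_ne_zero_iff.mpr hd)
  constructor
  · rintro ⟨w, hsum, hσ, hν, hrow, h0, hout, hin⟩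
    refine ⟨⟨w, fun d => ?_, funext fun j => by simp [hν]⟩, hsum⟩
    by_cases hd : d = 0
    · subst hd
      simpa [cappedBlocks, cappedBlock, hσ 0, hrow 0] using h0
    · simp only [cappedBlocks, if_neg hd]
      exact ⟨hσ d, hrow d, hout d (hpos d hd), hin d (hpos d hd)⟩
  · rintro ⟨⟨w, hblock, rfl⟩, hsum⟩
    have h0 : (σ 0, w 0) ∈ cappedBlock univ N := by simpa [cappedBlocks] using hblock 0
    have hF : ∀ d : Fin (D + 1), 1 ≤ (d : ℕ) → (σ d, w d) ∈ cappedBlock F d := fun d hd => by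
      have hd0 : d ≠ 0 := Fin.val_ne_zero_iff.mp (by omega)
      simpa [cappedBlocks, hd0] using hblock d
    have hcommon : ∀ d, 0 ≤ σ d ∧ ∑ j, w d j = σ d := fun d => by
      rcases eq_or_ne d 0 with rfl | hd
      · exact ⟨h0.1, h0.2.1⟩
      · exact ⟨(hF d (hpos d hd)).1, (hF d (hpos d hd)).2.1⟩
    refine ⟨w, hsum, fun d => (hcommon d).1, fun j => by simp, fun d => (hcommon d).2,
      fun j => h0.2.2.2 j (mem_univ j), fun d hd => (hF d hd).2.2.1, fun d hd => (hF d hd).2.2.2⟩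

end CappedBlock

theorem stmt_10_general (n N D : ℕ)
    (F : Finset (Fin n))
    (P : Set ((Fin (D + 1) → ℝ) × (Fin n → ℝ)))
    (hP : P = {p : (Fin (D + 1) → ℝ) × (Fin n → ℝ) |
      ∃ w : Fin (D + 1) → Fin n → ℝ,
        (∑ d, p.1 d) = 1 ∧
        (∀ d, 0 ≤ p.1 d) ∧
        (∀ j, p.2 j = ∑ d, w d j) ∧
        (∀ d, (∑ j, w d j) = p.1 d) ∧
        (∀ j, 0 ≤ w 0 j ∧ w 0 j ≤ p.1 0 / N) ∧
        (∀ d : Fin (D + 1), 1 ≤ (d : ℕ) → ∀ j ∉ F, w d j = 0) ∧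
        (∀ d : Fin (D + 1), 1 ≤ (d : ℕ) → ∀ j ∈ F,
          0 ≤ w d j ∧ w d j ≤ p.1 d / ((d : ℕ) : ℝ))}) :
    ∀ p ∈ Set.extremePoints ℝ P,
      ∃ dstar : Fin (D + 1), ∀ d, p.1 d = if d = dstar then 1 else 0 := by
  intro p hp
  rw [hP, setOf_eq_hull_cappedBlocks] at hp
  obtain ⟨dstar, hdstar⟩ := Disjunctive.fst_eq_single_of_mem_extremePoints_hull
    (fun _ => zero_mem_cappedBlock _ _) (fun _ _ hc _ hx => smul_mem_cappedBlock hc hx)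
    (fun _ _ hx => hx.1) hp
  exact ⟨dstar, fun d => by rw [hdstar, Pi.single_apply]⟩

theorem stmt_10 (n N D : ℕ) (hn : 1 ≤ n) (hN : 1 ≤ N) (hNn : N ≤ n)
    (F : Finset (Fin n)) (hD : D = F.card) (hD1 : 1 ≤ D)
    (P : Set ((Fin (D + 1) → ℝ) × (Fin n → ℝ)))
    (hP : P = {p : (Fin (D + 1) → ℝ) × (Fin n → ℝ) |
      ∃ w : Fin (D + 1) → Fin n → ℝ,
        (∑ d, p.1 d) = 1 ∧
        (∀ d, 0 ≤ p.1 d) ∧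
        (∀ j, p.2 j = ∑ d, w d j) ∧
        (∀ d, (∑ j, w d j) = p.1 d) ∧
        (∀ j, 0 ≤ w 0 j ∧ w 0 j ≤ p.1 0 / N) ∧
        (∀ d : Fin (D + 1), 1 ≤ (d : ℕ) → ∀ j ∉ F, w d j = 0) ∧
        (∀ d : Fin (D + 1), 1 ≤ (d : ℕ) → ∀ j ∈ F,
          0 ≤ w d j ∧ w d j ≤ p.1 d / ((d : ℕ) : ℝ))}) :
    ∀ p ∈ Set.extremePoints ℝ P,
      ∃ dstar : Fin (D + 1), ∀ d, p.1 d = if d = dstar then 1 else 0 :=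
  stmt_10_general n N D F P hP
end

section
/- The polytope P_x defined by equations (a)–(g) equals the convex hull of the points (e_d, ν) where e_d is the d-th standard basis vector of ℝ^{D+1}, and ν ∈ K_d, with K_0 = Z = {z : Σz_j = 1, 0 ≤ z_j ≤ 1/N} and K_d = {ν : Σν_j = 1, 0 ≤ ν_j ≤ 1/d on F, ν_j = 0 off F} for 1 ≤ d ≤ D. -/
/-!
Balas' disjunctive-programming argument. The constraints on `w d` say exactly that `(σ d, w d)`
lies in the cone over `{1} × K d`, i.e. `w d = 0` when `σ d = 0` and `(σ d)⁻¹ • w d ∈ K d`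
otherwise. Hence `(σ, ν) = ∑ σ d • (e_d, (σ d)⁻¹ • w d)`, summed over `σ d ≠ 0`, is a convex
combination of generators. Conversely every generator lies in `P`, and `P` is convex because
each `K d` is, so that the cone over it is closed under addition.
-/

open Finset
open scoped Pointwise

section Homogenization

variable {𝕜 E : Type*} [Field 𝕜] [LinearOrder 𝕜] [AddCommGroup E] [Module 𝕜 E]

def homogenization (K : Set E) : Set (𝕜 × E) :=
  {p | p = 0 ∨ 0 < p.1 ∧ p.2 ∈ p.1 • K}

variable {K : Set E}

theorem mk_mem_homogenization_iff {s : 𝕜} {w : E} :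
    (s, w) ∈ homogenization K ↔ s = 0 ∧ w = 0 ∨ 0 < s ∧ s⁻¹ • w ∈ K := by
  change (s, w) = 0 ∨ _ ↔ _
  refine or_congr Prod.mk_eq_zero (and_congr_right fun hs => ?_)
  exact Set.mem_smul_set_iff_inv_smul_mem₀ hs.ne' K w

theorem fst_nonneg_of_mem_homogenization {p : 𝕜 × E} (hp : p ∈ homogenization K) :
    0 ≤ p.1 := by
  rcases hp with rfl | ⟨hs, -⟩
  exacts [le_rfl, hs.le]

theorem smul_inv_smul_of_mem_homogenization {s : 𝕜} {w : E}
    (hp : (s, w) ∈ homogenization K) : s • s⁻¹ • w = w := by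
  rcases mk_mem_homogenization_iff.1 hp with ⟨-, rfl⟩ | ⟨hs, -⟩
  exacts [by simp, smul_inv_smul₀ hs.ne' w]

variable [IsStrictOrderedRing 𝕜]

theorem smul_mem_homogenization {c : 𝕜} (hc : 0 ≤ c) {p : 𝕜 × E}
    (hp : p ∈ homogenization K) : c • p ∈ homogenization K := by
  rcases hc.eq_or_lt with rfl | hc
  · exact Or.inl (zero_smul _ _)
  rcases hp with rfl | ⟨hs, hw⟩
  · exact Or.inl (smul_zero _)
  refine Or.inr ⟨mul_pos hc hs, ?_⟩
  simpa only [Prod.smul_fst, Prod.smul_snd, smul_eq_mul, mul_smul] using Set.smul_mem_smul_set hw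

theorem Convex.add_mem_homogenization (hK : Convex 𝕜 K) {p q : 𝕜 × E}
    (hp : p ∈ homogenization K) (hq : q ∈ homogenization K) : p + q ∈ homogenization K := by
  rcases hp with rfl | ⟨hs, hw⟩
  · rwa [zero_add]
  rcases hq with rfl | ⟨hs', hw'⟩
  · rw [add_zero]
    exact Or.inr ⟨hs, hw⟩
  refine Or.inr ⟨add_pos hs hs', ?_⟩
  rw [Prod.fst_add, hK.add_smul hs.le hs'.le]
  exact Set.add_mem_add hw hw'

theorem Convex.homogenization (hK : Convex 𝕜 K) : Convex 𝕜 (homogenization K : Set (𝕜 × E)) :=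
  fun _ hp _ hq _ _ ha hb _ =>
    hK.add_mem_homogenization (smul_mem_homogenization ha hp) (smul_mem_homogenization hb hq)

end Homogenization

section DisjunctiveHull

variable {𝕜 E ι : Type*} [Field 𝕜] [LinearOrder 𝕜] [IsStrictOrderedRing 𝕜]
  [AddCommGroup E] [Module 𝕜 E] [Fintype ι]

def disjunctiveLift (K : ι → Set E) : Set ((ι → 𝕜) × E) :=
  {p | ∑ i, p.1 i = 1 ∧ ∃ w : ι → E, p.2 = ∑ i, w i ∧ ∀ i, (p.1 i, w i) ∈ homogenization (K i)}

variable {K : ι → Set E}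

theorem convex_disjunctiveLift (hK : ∀ i, Convex 𝕜 (K i)) :
    Convex 𝕜 (disjunctiveLift K : Set ((ι → 𝕜) × E)) := by
  rintro ⟨σ, _⟩ ⟨hσ, w, rfl, hw⟩ ⟨σ', _⟩ ⟨hσ', w', rfl, hw'⟩ a b ha hb hab
  refine ⟨?_, a • w + b • w', ?_, fun i => (hK i).homogenization (hw i) (hw' i) ha hb hab⟩
  · simp only [Prod.fst_add, Prod.smul_fst, Pi.add_apply, Pi.smul_apply, smul_eq_mul,
      sum_add_distrib, ← mul_sum, hσ, hσ', mul_one, hab]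
  · simp only [Prod.snd_add, Prod.smul_snd, Pi.add_apply, Pi.smul_apply, sum_add_distrib,
      smul_sum]

variable [DecidableEq ι]

theorem single_prod_subset_disjunctiveLift (i : ι) :
    ({Pi.single i 1} : Set (ι → 𝕜)) ×ˢ K i ⊆ disjunctiveLift K := by
  rintro ⟨_, k⟩ ⟨rfl, hk⟩
  refine ⟨by simp, Pi.single i k, by simp, fun j => ?_⟩
  rcases eq_or_ne j i with rfl | hji
  · refine Or.inr ⟨by simp, by simpa using hk⟩
  · exact Or.inl (by simp [Pi.single_eq_of_ne hji])

theorem disjunctiveLift_subset_convexHull :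
    disjunctiveLift K ⊆ convexHull 𝕜 (⋃ i, ({Pi.single i 1} : Set (ι → 𝕜)) ×ˢ K i) := by
  rintro ⟨σ, _⟩ ⟨hσ, w, rfl, hw⟩
  set z : ι → (ι → 𝕜) × E := fun i => (Pi.single i 1, (σ i)⁻¹ • w i)
  have hcenter : (σ, ∑ i, w i) = univ.centerMass σ z := by
    rw [centerMass_eq_of_sum_1 _ _ hσ, Prod.ext_iff]
    simp only [z, Prod.fst_sum, Prod.snd_sum, Prod.smul_mk, ← Pi.single_smul', smul_eq_mul, mul_one,
      univ_sum_single, smul_inv_smul_of_mem_homogenization (hw _), and_self]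
  rw [hcenter, ← centerMass_filter_ne_zero]
  refine centerMass_mem_convexHull _ (fun i _ => fst_nonneg_of_mem_homogenization (hw i))
    (by rw [sum_filter_ne_zero, hσ]; exact one_pos) fun i hi => ?_
  have hσi : σ i ≠ 0 := (mem_filter.1 hi).2
  obtain ⟨hσi', -⟩ | ⟨-, hwi⟩ := mk_mem_homogenization_iff.1 (hw i)
  · exact absurd hσi' hσi
  · exact Set.mem_iUnion.2 ⟨i, Set.mk_mem_prod rfl hwi⟩

theorem convexHull_iUnion_single_prod (hK : ∀ i, Convex 𝕜 (K i)) :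
    convexHull 𝕜 (⋃ i, ({Pi.single i 1} : Set (ι → 𝕜)) ×ˢ K i) = disjunctiveLift K :=
  (convexHull_min (Set.iUnion_subset single_prod_subset_disjunctiveLift)
    (convex_disjunctiveLift hK)).antisymm disjunctiveLift_subset_convexHull

end DisjunctiveHull

section BoxSimplex

variable {𝕜 α : Type*} [Field 𝕜] [LinearOrder 𝕜] [IsStrictOrderedRing 𝕜] [Fintype α]

def boxSimplex (S : Finset α) (c : 𝕜) : Set (α → 𝕜) :=
  {ν | ∑ j, ν j = 1 ∧ (∀ j ∈ S, 0 ≤ ν j ∧ ν j ≤ 1 / c) ∧ ∀ j ∉ S, ν j = 0}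

variable {S : Finset α} {c : 𝕜}

theorem convex_boxSimplex : Convex 𝕜 (boxSimplex S c) := by
  rintro x ⟨hx, hxS, hx0⟩ y ⟨hy, hyS, hy0⟩ a b ha hb hab
  refine ⟨?_, fun j hj => ?_, fun j hj => by simp [hx0 j hj, hy0 j hj]⟩ <;>
    simp only [Pi.add_apply, Pi.smul_apply, smul_eq_mul]
  · rw [sum_add_distrib, ← mul_sum, ← mul_sum, hx, hy, mul_one, mul_one, hab]
  · obtain ⟨hx₀, hx₁⟩ := hxS j hj
    obtain ⟨hy₀, hy₁⟩ := hyS j hj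
    refine ⟨by positivity, ?_⟩
    calc a * x j + b * y j ≤ a * (1 / c) + b * (1 / c) := by gcongr
      _ = 1 / c := by rw [← add_mul, hab, one_mul]

theorem inv_smul_mem_boxSimplex_iff {s : 𝕜} (hs : 0 < s) {w : α → 𝕜} :
    s⁻¹ • w ∈ boxSimplex S c ↔
      ∑ j, w j = s ∧ (∀ j ∈ S, 0 ≤ w j ∧ w j ≤ s / c) ∧ ∀ j ∉ S, w j = 0 := by
  simp only [boxSimplex, Set.mem_ofPred_eq, Pi.smul_apply, smul_eq_mul, ← mul_sum,
    inv_mul_eq_one₀ hs.ne', mul_eq_zero, inv_eq_zero, hs.ne', false_or, inv_mul_le_iff₀ hs,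
    mul_one_div, eq_comm (a := s), mul_nonneg_iff_of_pos_left (inv_pos.2 hs)]

theorem mk_mem_homogenization_boxSimplex_iff {s : 𝕜} {w : α → 𝕜} :
    (s, w) ∈ homogenization (boxSimplex S c) ↔
      ∑ j, w j = s ∧ (∀ j ∈ S, 0 ≤ w j ∧ w j ≤ s / c) ∧ ∀ j ∉ S, w j = 0 := by
  rw [mk_mem_homogenization_iff]
  constructor
  · rintro (⟨rfl, rfl⟩ | ⟨hs, hw⟩)
    · simp
    · exact (inv_smul_mem_boxSimplex_iff hs).1 hw
  · rintro ⟨hsum, hS, hSc⟩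
    have hw : ∀ j, 0 ≤ w j := fun j => by
      by_cases hj : j ∈ S
      exacts [(hS j hj).1, (hSc j hj).ge]
    rcases (hsum ▸ sum_nonneg fun j _ => hw j : 0 ≤ s).eq_or_lt with rfl | hs
    · refine Or.inl ⟨rfl, funext fun j => ?_⟩
      exact (sum_eq_zero_iff_of_nonneg fun j _ => hw j).1 hsum j (mem_univ j)
    · exact Or.inr ⟨hs, (inv_smul_mem_boxSimplex_iff hs).2 ⟨hsum, hS, hSc⟩⟩

end BoxSimplex

theorem stmt_11_general (n N D : ℕ) (F : Finset (Fin n))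
    (P : Set ((Fin (D + 1) → ℝ) × (Fin n → ℝ)))
    (hP : P = {p : (Fin (D + 1) → ℝ) × (Fin n → ℝ) |
      ∃ w : Fin (D + 1) → Fin n → ℝ,
        (∑ d, p.1 d) = 1 ∧
        (∀ d, 0 ≤ p.1 d) ∧
        (∀ j, p.2 j = ∑ d, w d j) ∧
        (∀ d, (∑ j, w d j) = p.1 d) ∧
        (∀ j, 0 ≤ w 0 j ∧ w 0 j ≤ p.1 0 / N) ∧
        (∀ d : Fin (D + 1), 1 ≤ (d : ℕ) → ∀ j ∉ F, w d j = 0) ∧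
        (∀ d : Fin (D + 1), 1 ≤ (d : ℕ) → ∀ j ∈ F,
          0 ≤ w d j ∧ w d j ≤ p.1 d / ((d : ℕ) : ℝ))})
    (K : Fin (D + 1) → Set (Fin n → ℝ))
    (hK0 : K 0 = {z : Fin n → ℝ | (∑ j, z j) = 1 ∧ ∀ j, 0 ≤ z j ∧ z j ≤ 1 / N})
    (hKd : ∀ d : Fin (D + 1), 1 ≤ (d : ℕ) →
      K d = {ν : Fin n → ℝ | (∑ j, ν j) = 1 ∧
        (∀ j ∈ F, 0 ≤ ν j ∧ ν j ≤ 1 / ((d : ℕ) : ℝ)) ∧ (∀ j ∉ F, ν j = 0)}) :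
    P = convexHull ℝ (⋃ d : Fin (D + 1),
      ({fun d' => if d' = d then (1 : ℝ) else 0} : Set (Fin (D + 1) → ℝ)) ×ˢ K d) := by
  have hK0' : K 0 = boxSimplex univ (N : ℝ) := by
    rw [hK0]; ext z; simp [boxSimplex]
  have hKd' : ∀ d : Fin (D + 1), d ≠ 0 → K d = boxSimplex F ((d : ℕ) : ℝ) := fun d hd =>
    hKd d (Nat.one_le_iff_ne_zero.2 (Fin.val_ne_zero_iff.2 hd))
  have hmem : ∀ d (s : ℝ) (v : Fin n → ℝ), (s, v) ∈ homogenization (K d) ↔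
      ∑ j, v j = s ∧ (d = 0 → ∀ j, 0 ≤ v j ∧ v j ≤ s / N) ∧
        (1 ≤ (d : ℕ) → (∀ j ∉ F, v j = 0) ∧ ∀ j ∈ F, 0 ≤ v j ∧ v j ≤ s / ((d : ℕ) : ℝ)) := by
    intro d s v
    rcases eq_or_ne d 0 with rfl | hd
    · simp [hK0', mk_mem_homogenization_boxSimplex_iff]
    · simp [hKd' d hd, mk_mem_homogenization_boxSimplex_iff, hd, Nat.one_le_iff_ne_zero, and_comm]
  have hconv : ∀ d, Convex ℝ (K d) := fun d => by
    rcases eq_or_ne d 0 with rfl | hd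
    exacts [hK0' ▸ convex_boxSimplex, hKd' d hd ▸ convex_boxSimplex]
  simp_rw [← Pi.single_apply]
  rw [convexHull_iUnion_single_prod hconv, hP]
  ext ⟨σ, ν⟩
  constructor
  · rintro ⟨w, hσ, -, hν, hw, hw0, hwF, hwd⟩
    exact ⟨hσ, w, funext fun j => (hν j).trans (sum_apply j _ _).symm,
      fun d => (hmem d _ _).2 ⟨hw d, fun hd => hd ▸ hw0, fun hd => ⟨hwF d hd, hwd d hd⟩⟩⟩
  · rintro ⟨hσ, w, rfl, hw⟩
    exact ⟨w, hσ, fun d => fst_nonneg_of_mem_homogenization (hw d), fun j => sum_apply j univ w,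
      fun d => ((hmem d _ _).1 (hw d)).1, ((hmem 0 _ _).1 (hw 0)).2.1 rfl,
      fun d hd => (((hmem d _ _).1 (hw d)).2.2 hd).1,
      fun d hd => (((hmem d _ _).1 (hw d)).2.2 hd).2⟩

theorem stmt_11 (n N D : ℕ) (hn : 1 ≤ n) (hN : 1 ≤ N) (hNn : N ≤ n)
    (F : Finset (Fin n)) (hD : D = F.card) (hD1 : 1 ≤ D)
    (P : Set ((Fin (D + 1) → ℝ) × (Fin n → ℝ)))
    (hP : P = {p : (Fin (D + 1) → ℝ) × (Fin n → ℝ) |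
      ∃ w : Fin (D + 1) → Fin n → ℝ,
        (∑ d, p.1 d) = 1 ∧
        (∀ d, 0 ≤ p.1 d) ∧
        (∀ j, p.2 j = ∑ d, w d j) ∧
        (∀ d, (∑ j, w d j) = p.1 d) ∧
        (∀ j, 0 ≤ w 0 j ∧ w 0 j ≤ p.1 0 / N) ∧
        (∀ d : Fin (D + 1), 1 ≤ (d : ℕ) → ∀ j ∉ F, w d j = 0) ∧
        (∀ d : Fin (D + 1), 1 ≤ (d : ℕ) → ∀ j ∈ F,
          0 ≤ w d j ∧ w d j ≤ p.1 d / ((d : ℕ) : ℝ))})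
    (K : Fin (D + 1) → Set (Fin n → ℝ))
    (hK0 : K 0 = {z : Fin n → ℝ | (∑ j, z j) = 1 ∧ ∀ j, 0 ≤ z j ∧ z j ≤ 1 / N})
    (hKd : ∀ d : Fin (D + 1), 1 ≤ (d : ℕ) →
      K d = {ν : Fin n → ℝ | (∑ j, ν j) = 1 ∧
        (∀ j ∈ F, 0 ≤ ν j ∧ ν j ≤ 1 / ((d : ℕ) : ℝ)) ∧ (∀ j ∉ F, ν j = 0)}) :
    P = convexHull ℝ (⋃ d : Fin (D + 1),
      ({fun d' => if d' = d then (1 : ℝ) else 0} : Set (Fin (D + 1) → ℝ)) ×ˢ K d) :=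
  stmt_11_general n N D F P hP K hK0 hKd
end

section
/- Let T_i(v) = min over d ∈ {0,1,…,D_i} of w_i^d where w_i^0 = c'_i + γ + (α/(1−α))λ(v) with λ(v) = ((1−α)/N)Σ_{k=1}^{N} v_{φ(k)} (φ sorting v increasingly), and w_i^d = c'_i + γ(D_i−d)/D_i + (α/d)Σ_{k=1}^{d} v_{ψ(k)} (ψ sorting v on F_i increasingly). Then T_i(v) equals min_{(σ,ν) ∈ P_i} [c'_i + γ(D_i − Σ_d dσ^d)/D_i + αΣ_j ν_j v_j], i.e., the sort-based evaluation in the MaxRank algorithm computes the dynamic programming operator exactly. -/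
/-!
The objective is affine in `(σ, ν)`, so by the minimum principle for concave functions its
infimum over the convex hull `P` is attained on the generating set `⋃ d, {e_d} ×ˢ K d`, hence
equals the minimum over `d` of the minima over the slices `K d`. Each `K d` is a capped simplex
`{ν | ∑ ν = 1, 0 ≤ ν ≤ 1/m on G, ν = 0 off G}`, on which `ν ↦ ∑ ν_j v_j` is minimised by the
greedy point putting weight `1/m` on the `m` smallest values of `v` on `G`; the sorting maps
`φ` and `ψ` list exactly these values, which turns each slice minimum into `w d`.
-/

open Finset Function

section PrefixAverage

variable {c m : ℕ}

theorem sum_ite_lt_one_div (hm : 1 ≤ m) (hmc : m ≤ c) :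
    ∑ k : Fin c, (if (k : ℕ) < m then (1 / m : ℝ) else 0) = 1 := by
  have : (m : ℝ) ≠ 0 := by positivity
  simp [Finset.sum_ite, Fin.card_filter_val_lt, min_eq_right hmc]
  field_simp

theorem prefix_average_le_sum_mul (hm : 1 ≤ m) (hmc : m ≤ c) {u μ : Fin c → ℝ}
    (hu : Monotone u) (hμ : ∀ k, 0 ≤ μ k ∧ μ k ≤ 1 / m) (hμsum : ∑ k, μ k = 1) :
    (1 / m : ℝ) * ∑ k : Fin c, (if (k : ℕ) < m then u k else 0) ≤ ∑ k, μ k * u k := by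
  set a : Fin c → ℝ := fun k => if (k : ℕ) < m then 1 / m else 0
  have hau : ∑ k, a k * u k = (1 / m : ℝ) * ∑ k : Fin c, (if (k : ℕ) < m then u k else 0) := by
    rw [mul_sum]
    exact sum_congr rfl fun k _ => by split_ifs <;> simp [a, *]
  -- `t` is the `m`-th smallest value; each term below is a product of two factors of equal sign
  set t := u ⟨m - 1, by omega⟩
  have hterm : ∀ k, 0 ≤ (μ k - a k) * (u k - t) := by
    intro k
    by_cases hk : (k : ℕ) < m
    · have : u k ≤ t := hu (Fin.mk_le_mk.mpr (by omega))
      simp only [a, hk, if_true]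
      nlinarith [(hμ k).2]
    · have : t ≤ u k := hu (Fin.mk_le_mk.mpr (by omega))
      simp only [a, hk, if_false]
      nlinarith [(hμ k).1]
  have hexpand : ∑ k, (μ k - a k) * (u k - t)
      = ∑ k, μ k * u k - ∑ k, a k * u k - (∑ k, μ k - ∑ k, a k) * t := by
    simp only [sub_mul, mul_sub, sum_sub_distrib, sum_mul]
  rw [hμsum, sum_ite_lt_one_div hm hmc, sub_self, zero_mul, sub_zero, hau] at hexpand
  rw [← sub_nonneg, ← hexpand]
  exact sum_nonneg fun k _ => hterm k

end PrefixAverage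

section CappedSimplex

variable {ι : Type*} {G : Finset ι} {c : ℕ} {σ : Fin c → ι}

theorem Finset.map_univ_eq_of_card_eq (hc : G.card = c) (hσ : Injective σ) (hσG : ∀ k, σ k ∈ G) :
    univ.map ⟨σ, hσ⟩ = G :=
  eq_of_subset_of_card_le (fun j hj => by obtain ⟨k, -, rfl⟩ := mem_map.mp hj; exact hσG k)
    (by simp [hc])

variable [Fintype ι]

def cappedSimplex (G : Finset ι) (m : ℕ) : Set (ι → ℝ) :=
  {ν | ∑ j, ν j = 1 ∧ (∀ j ∈ G, 0 ≤ ν j ∧ ν j ≤ 1 / (m : ℝ)) ∧ ∀ j ∉ G, ν j = 0}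

theorem sum_mul_eq_sum_comp_of_card_eq (hc : G.card = c) (hσ : Injective σ) (hσG : ∀ k, σ k ∈ G)
    (ν : ι → ℝ) (hν : ∀ j ∉ G, ν j = 0) (g : ι → ℝ) :
    ∑ j, ν j * g j = ∑ k, ν (σ k) * g (σ k) := by
  rw [← sum_subset (subset_univ G) fun j _ hj => by rw [hν j hj, zero_mul],
    ← Finset.map_univ_eq_of_card_eq hc hσ hσG, sum_map]
  rfl

theorem isLeast_cappedSimplex (hc : G.card = c) (hσ : Injective σ) (hσG : ∀ k, σ k ∈ G)
    {m : ℕ} (hm : 1 ≤ m) (hmc : m ≤ c) {v : ι → ℝ} (hv : Monotone (v ∘ σ)) :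
    IsLeast ((fun ν => ∑ j, ν j * v j) '' cappedSimplex G m)
      ((1 / m : ℝ) * ∑ k : Fin c, if (k : ℕ) < m then v (σ k) else 0) := by
  have hsum := sum_mul_eq_sum_comp_of_card_eq hc hσ hσG
  have htotal : ∀ ν : ι → ℝ, (∀ j ∉ G, ν j = 0) → ∑ j, ν j = ∑ k, ν (σ k) := by
    simpa using fun ν hν => hsum ν hν 1
  constructor
  · set a : Fin c → ℝ := fun k => if (k : ℕ) < m then 1 / m else 0
    set ν := extend σ a 0
    have hνσ : ∀ k, ν (σ k) = a k := hσ.extend_apply a 0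
    have hν0 : ∀ j ∉ G, ν j = 0 := fun j hj =>
      extend_apply' _ _ _ fun ⟨k, hk⟩ => hj (hk ▸ hσG k)
    refine ⟨ν, ⟨?_, fun j hj => ?_, hν0⟩, ?_⟩
    · simpa only [htotal ν hν0, hνσ] using sum_ite_lt_one_div hm hmc
    · obtain ⟨k, -, rfl⟩ := mem_map.mp ((Finset.map_univ_eq_of_card_eq hc hσ hσG).symm ▸ hj)
      show 0 ≤ ν (σ k) ∧ ν (σ k) ≤ 1 / m
      rw [hνσ]
      simp only [a]
      split_ifs <;> simp
    · show ∑ j, ν j * v j = _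
      rw [hsum ν hν0, mul_sum]
      exact sum_congr rfl fun k _ => by rw [hνσ]; split_ifs <;> simp [a, *]
  · rintro _ ⟨ν, ⟨hν1, hνG, hν0⟩, rfl⟩
    show _ ≤ ∑ j, ν j * v j
    rw [hsum ν hν0]
    exact prefix_average_le_sum_mul hm hmc hv (fun k => hνG _ (hσG k)) (htotal ν hν0 ▸ hν1)

end CappedSimplex

theorem ConcaveOn.isLeast_image_convexHull {𝕜 E β : Type*} [Field 𝕜] [LinearOrder 𝕜]
    [IsStrictOrderedRing 𝕜] [AddCommGroup E] [AddCommGroup β] [LinearOrder β]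
    [IsOrderedAddMonoid β] [Module 𝕜 E] [Module 𝕜 β] [IsStrictOrderedModule 𝕜 β]
    {s : Set E} {f : E → β} {a : β} (hf : ConcaveOn 𝕜 (convexHull 𝕜 s) f)
    (h : IsLeast (f '' s) a) : IsLeast (f '' convexHull 𝕜 s) a := by
  refine ⟨Set.image_mono (subset_convexHull 𝕜 s) h.1, ?_⟩
  rintro _ ⟨x, hx, rfl⟩
  obtain ⟨y, hy, hyx⟩ := hf.exists_le_of_mem_convexHull (subset_convexHull 𝕜 s) hx
  exact (h.2 ⟨y, hy, rfl⟩).trans hyx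

theorem isLeast_image_iUnion {α β ι : Type*} [LinearOrder β] [Fintype ι] [Nonempty ι]
    {f : α → β} {T : ι → Set α} {w : ι → β} (h : ∀ d, IsLeast (f '' T d) (w d)) :
    IsLeast (f '' ⋃ d, T d) (univ.inf' univ_nonempty w) := by
  rw [Set.image_iUnion]
  obtain ⟨d₀, -, hd₀⟩ := exists_mem_eq_inf' univ_nonempty w
  refine ⟨hd₀ ▸ Set.mem_iUnion.2 ⟨d₀, (h d₀).1⟩, fun x hx => ?_⟩
  obtain ⟨d, hd⟩ := Set.mem_iUnion.1 hx
  exact (inf'_le w (mem_univ d)).trans ((h d).2 hd)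

theorem IsLeast.image_const_add_mul {E : Type*} {L : E → ℝ} {s : Set E} {a : ℝ}
    (h : IsLeast (L '' s) a) {α : ℝ} (hα : 0 ≤ α) (C : ℝ) :
    IsLeast ((fun x => C + α * L x) '' s) (C + α * a) := by
  simpa only [Set.image_image] using
    ((monotone_mul_left_of_nonneg hα).const_add C).map_isLeast h

theorem concaveOn_affine_objective {ι κ : Type*} [Fintype ι] [Fintype κ] (C γ α D : ℝ)
    (a : κ → ℝ) (v : ι → ℝ) :
    ConcaveOn ℝ Set.univ fun p : (κ → ℝ) × (ι → ℝ) =>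
      C + γ * (D - ∑ d, a d * p.1 d) / D + α * ∑ j, p.2 j * v j := by
  refine ⟨convex_univ, fun x _ y _ s t _ _ hst => le_of_eq ?_⟩
  simp only [Prod.fst_add, Prod.snd_add, Prod.smul_fst, Prod.smul_snd, Pi.add_apply,
    Pi.smul_apply, smul_eq_mul, mul_add, add_mul, sum_add_distrib, mul_left_comm _ s,
    mul_left_comm _ t, ← mul_sum, mul_assoc s, mul_assoc t]
  linear_combination (C + γ * D / D) * hst

theorem stmt_12_general (n N : ℕ) (hN : 1 ≤ N) (hNn : N ≤ n)
    (α : ℝ) (hα : 0 ≤ α) (hα1 : α < 1) (γ : ℝ)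
    (c' : Fin n → ℝ) (i : Fin n)
    (F : Finset (Fin n)) (D : ℕ) (hD : D = F.card) (hD1 : 1 ≤ D)
    (K : Fin (D + 1) → Set (Fin n → ℝ))
    (hK0 : K 0 = {z : Fin n → ℝ | (∑ j, z j) = 1 ∧ ∀ j, 0 ≤ z j ∧ z j ≤ 1 / N})
    (hKd : ∀ d : Fin (D + 1), 1 ≤ (d : ℕ) →
      K d = {ν : Fin n → ℝ | (∑ j, ν j) = 1 ∧
        (∀ j ∈ F, 0 ≤ ν j ∧ ν j ≤ 1 / ((d : ℕ) : ℝ)) ∧ (∀ j ∉ F, ν j = 0)})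
    (P : Set ((Fin (D + 1) → ℝ) × (Fin n → ℝ)))
    (hP : P = convexHull ℝ (⋃ d : Fin (D + 1),
      ({fun d' => if d' = d then (1 : ℝ) else 0} : Set (Fin (D + 1) → ℝ)) ×ˢ K d))
    (v : Fin n → ℝ)
    (φ : Fin n → Fin n) (hφbij : Function.Bijective φ)
    (hφsort : ∀ k l : Fin n, k ≤ l → v (φ k) ≤ v (φ l))
    (ψ : Fin F.card → Fin n) (hψinj : Function.Injective ψ)
    (hψrange : ∀ k, ψ k ∈ F)
    (hψsort : ∀ k l : Fin F.card, k ≤ l → v (ψ k) ≤ v (ψ l))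
    (lam : ℝ)
    (hlam : lam = ((1 - α) / N) * ∑ k : Fin n, (if (k : ℕ) < N then v (φ k) else 0))
    (w : Fin (D + 1) → ℝ)
    (hw0 : w 0 = c' i + γ + (α / (1 - α)) * lam)
    (hwd : ∀ d : Fin (D + 1), 1 ≤ (d : ℕ) →
      w d = c' i + γ * ((D : ℝ) - (d : ℕ)) / D
        + (α / ((d : ℕ) : ℝ)) * ∑ k : Fin F.card, (if (k : ℕ) < (d : ℕ) then v (ψ k) else 0)) :
    Finset.univ.inf' Finset.univ_nonempty w =
      sInf ((fun p : (Fin (D + 1) → ℝ) × (Fin n → ℝ) =>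
        c' i + γ * ((D : ℝ) - ∑ d : Fin (D + 1), (d.val : ℝ) * p.1 d) / (D : ℝ)
          + α * ∑ j, p.2 j * v j) '' P) := by
  subst hD hP
  set f := fun p : (Fin (F.card + 1) → ℝ) × (Fin n → ℝ) =>
    c' i + γ * ((F.card : ℝ) - ∑ d : Fin (F.card + 1), (d.val : ℝ) * p.1 d) / (F.card : ℝ)
      + α * ∑ j, p.2 j * v j
  have hvertex : ∀ d : Fin (F.card + 1),
      IsLeast (f '' ({fun d' => if d' = d then 1 else 0} ×ˢ K d)) (w d) := by
    intro d
    rw [Set.singleton_prod, Set.image_image]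
    simp only [f, mul_ite, mul_one, mul_zero, sum_ite_eq', mem_univ, if_true]
    rcases (d : ℕ).eq_zero_or_pos with hd | hd
    · obtain rfl : d = 0 := Fin.ext hd
      have hK : K 0 = cappedSimplex univ N := by
        rw [hK0]; ext; simp [cappedSimplex]
      have hF : (F.card : ℝ) ≠ 0 := Nat.cast_ne_zero.2 (by omega)
      rw [hK, hw0, hlam, Fin.val_zero, Nat.cast_zero, sub_zero]
      convert (isLeast_cappedSimplex (by simp) hφbij.injective (fun _ => mem_univ _) hN hNn
        hφsort).image_const_add_mul hα (c' i + γ * F.card / F.card) using 1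
      field_simp [sub_ne_zero.2 hα1.ne']
    · rw [hwd d hd]
      convert (isLeast_cappedSimplex rfl hψinj hψrange hd (by omega) hψsort).image_const_add_mul
        hα (c' i + γ * (F.card - (d : ℕ)) / F.card) using 1
      · rw [hKd d hd]; rfl
      · ring
  exact (((concaveOn_affine_objective _ _ _ _ _ v).subset (Set.subset_univ _)
    (convex_convexHull ℝ _)).isLeast_image_convexHull (isLeast_image_iUnion hvertex)).csInf_eq.symm

theorem stmt_12 (n N : ℕ) (hn : 1 ≤ n) (hN : 1 ≤ N) (hNn : N ≤ n)
    (α : ℝ) (hα : 0 ≤ α) (hα1 : α < 1) (γ : ℝ) (hγ : 0 < γ)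
    (c' : Fin n → ℝ) (i : Fin n)
    (F : Finset (Fin n)) (D : ℕ) (hD : D = F.card) (hD1 : 1 ≤ D)
    (K : Fin (D + 1) → Set (Fin n → ℝ))
    (hK0 : K 0 = {z : Fin n → ℝ | (∑ j, z j) = 1 ∧ ∀ j, 0 ≤ z j ∧ z j ≤ 1 / N})
    (hKd : ∀ d : Fin (D + 1), 1 ≤ (d : ℕ) →
      K d = {ν : Fin n → ℝ | (∑ j, ν j) = 1 ∧
        (∀ j ∈ F, 0 ≤ ν j ∧ ν j ≤ 1 / ((d : ℕ) : ℝ)) ∧ (∀ j ∉ F, ν j = 0)})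
    (P : Set ((Fin (D + 1) → ℝ) × (Fin n → ℝ)))
    (hP : P = convexHull ℝ (⋃ d : Fin (D + 1),
      ({fun d' => if d' = d then (1 : ℝ) else 0} : Set (Fin (D + 1) → ℝ)) ×ˢ K d))
    (v : Fin n → ℝ)
    (φ : Fin n → Fin n) (hφbij : Function.Bijective φ)
    (hφsort : ∀ k l : Fin n, k ≤ l → v (φ k) ≤ v (φ l))
    (ψ : Fin F.card → Fin n) (hψinj : Function.Injective ψ)
    (hψrange : ∀ k, ψ k ∈ F)
    (hψsort : ∀ k l : Fin F.card, k ≤ l → v (ψ k) ≤ v (ψ l))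
    (lam : ℝ)
    (hlam : lam = ((1 - α) / N) * ∑ k : Fin n, (if (k : ℕ) < N then v (φ k) else 0))
    (w : Fin (D + 1) → ℝ)
    (hw0 : w 0 = c' i + γ + (α / (1 - α)) * lam)
    (hwd : ∀ d : Fin (D + 1), 1 ≤ (d : ℕ) →
      w d = c' i + γ * ((D : ℝ) - (d : ℕ)) / D
        + (α / ((d : ℕ) : ℝ)) * ∑ k : Fin F.card, (if (k : ℕ) < (d : ℕ) then v (ψ k) else 0)) :
    Finset.univ.inf' Finset.univ_nonempty w =
      sInf ((fun p : (Fin (D + 1) → ℝ) × (Fin n → ℝ) =>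
        c' i + γ * ((D : ℝ) - ∑ d : Fin (D + 1), (d.val : ℝ) * p.1 d) / (D : ℝ)
          + α * ∑ j, p.2 j * v j) '' P) :=
  stmt_12_general n N hN hNn α hα hα1 γ c' i F D hD hD1 K hK0 hKd P hP v φ hφbij hφsort ψ hψinj
    hψrange hψsort lam hlam w hw0 hwd
end
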